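/- Let T be a closed subset of [0,1] containing 0 and 1. The restriction map J|_{H¹} : H¹ → H_T (restricting a Cameron–Martin path on [0,1] to T) is surjective onto H_T. -/

import Mathlib

open MeasureTheory Set
open scoped ENNReal Classical

noncomputable def rhoBar (T : Set ℝ) (t : ℝ) : ℝ :=
  if t = 0 then 0 else sSup {u | u ∈ T ∧ u < t}

noncomputable def sigmaBar (T : Set ℝ) (t : ℝ) : ℝ :=
  if t = 1 then 1 else sInf {u | u ∈ T ∧ t < u}

noncomputable def lamDelta (T : Set ℝ) : Measure ℝ :=
  Measure.map (rhoBar T) (volume.restrict (Icc 0 1))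

/-!
Since `λ_Δ` is the push-forward of Lebesgue measure on `[0,1]` under the backward jump
`ρ̄`, the path with derivative `g = h^Δ ∘ ρ̄` lies in `H¹`. For `t ∈ T` we have, up to the
null set `{t}`, `ρ̄ s ∈ [0,t) ∩ T ↔ s ∈ [0,t)`, so the change of variables turns
`∫_{[0,t) ∩ T} h^Δ dλ_Δ` into `∫_0^t g`.
-/

section rhoBar

variable {T : Set ℝ}

lemma rhoBar_of_pos {s : ℝ} (hs : 0 < s) : rhoBar T s = sSup {u | u ∈ T ∧ u < s} :=
  if_neg hs.ne'

lemma bddAbove_mem_lt (s : ℝ) : BddAbove {u | u ∈ T ∧ u < s} :=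
  ⟨s, fun _ hu => hu.2.le⟩

lemma rhoBar_of_nonpos (hT₀ : T ⊆ Ici 0) {s : ℝ} (hs : s ≤ 0) : rhoBar T s = 0 := by
  unfold rhoBar
  split_ifs
  · rfl
  · have hempty : {u | u ∈ T ∧ u < s} = ∅ :=
      eq_empty_of_forall_notMem fun u hu => (hu.2.trans_le hs).not_ge (hT₀ hu.1)
    rw [hempty, Real.sSup_empty]

lemma rhoBar_le_self {s : ℝ} (hs : 0 < s) : rhoBar T s ≤ s := by
  rw [rhoBar_of_pos hs]
  rcases eq_empty_or_nonempty {u | u ∈ T ∧ u < s} with h | h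
  · rw [h, Real.sSup_empty]; exact hs.le
  · exact csSup_le h fun u hu => hu.2.le

lemma le_rhoBar_of_mem_of_lt (hT₀ : T ⊆ Ici 0) {t s : ℝ} (ht : t ∈ T) (hts : t < s) :
    t ≤ rhoBar T s := by
  rw [rhoBar_of_pos ((hT₀ ht).trans_lt hts)]
  exact le_csSup (bddAbove_mem_lt s) ⟨ht, hts⟩

lemma rhoBar_nonneg (hT₀ : T ⊆ Ici 0) (h0T : (0:ℝ) ∈ T) (s : ℝ) : 0 ≤ rhoBar T s := by
  rcases le_or_gt s 0 with hs | hs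
  · rw [rhoBar_of_nonpos hT₀ hs]
  · exact le_rhoBar_of_mem_of_lt hT₀ h0T hs

lemma rhoBar_mem (hT : IsClosed T) (hT₀ : T ⊆ Ici 0) (h0T : (0:ℝ) ∈ T) (s : ℝ) :
    rhoBar T s ∈ T := by
  rcases le_or_gt s 0 with hs | hs
  · rw [rhoBar_of_nonpos hT₀ hs]; exact h0T
  · rw [rhoBar_of_pos hs]
    exact closure_minimal (fun _ hu => hu.1) hT
      (csSup_mem_closure ⟨0, h0T, hs⟩ (bddAbove_mem_lt s))

lemma monotone_rhoBar (hT₀ : T ⊆ Ici 0) (h0T : (0:ℝ) ∈ T) : Monotone (rhoBar T) := by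
  intro a b hab
  rcases le_or_gt a 0 with ha | ha
  · rw [rhoBar_of_nonpos hT₀ ha]
    exact rhoBar_nonneg hT₀ h0T b
  · rw [rhoBar_of_pos ha, rhoBar_of_pos (ha.trans_le hab)]
    exact csSup_le_csSup (bddAbove_mem_lt b) ⟨0, h0T, ha⟩
      fun u hu => ⟨hu.1, hu.2.trans_le hab⟩

lemma rhoBar_mem_Ico_inter_iff (hT : IsClosed T) (hT₀ : T ⊆ Ici 0) (h0T : (0:ℝ) ∈ T)
    {t s : ℝ} (ht : t ∈ T) (hs : 0 ≤ s) (hst : s ≠ t) :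
    rhoBar T s ∈ Ico 0 t ∩ T ↔ s ∈ Ico 0 t := by
  refine ⟨fun ⟨⟨_, hρt⟩, _⟩ => ⟨hs, ?_⟩, fun ⟨_, hst'⟩ => ⟨⟨?_, ?_⟩, ?_⟩⟩
  · exact hst.lt_or_gt.resolve_right fun hts =>
      (le_rhoBar_of_mem_of_lt hT₀ ht hts).not_gt hρt
  · exact rhoBar_nonneg hT₀ h0T s
  · rcases hs.eq_or_lt with rfl | hs
    · rwa [rhoBar_of_nonpos hT₀ le_rfl]
    · exact (rhoBar_le_self hs).trans_lt hst'
  · exact rhoBar_mem hT hT₀ h0T s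

lemma rhoBar_preimage_Ico_inter_ae_eq (hT : IsClosed T) (hT₀ : T ⊆ Ici 0)
    (h0T : (0:ℝ) ∈ T) {t : ℝ} (ht : t ∈ T) :
    rhoBar T ⁻¹' (Ico 0 t ∩ T) =ᵐ[volume.restrict (Icc 0 1)] Ico (0:ℝ) t := by
  have hne : ∀ᵐ s ∂(volume.restrict (Icc (0:ℝ) 1)), s ≠ t :=
    ae_restrict_of_ae (Measure.ae_ne volume t)
  filter_upwards [ae_restrict_mem measurableSet_Icc, hne] with s hs hst
  exact propext (rhoBar_mem_Ico_inter_iff hT hT₀ h0T ht hs.1 hst)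

end rhoBar

section lamDelta

variable {T : Set ℝ}

lemma memLp_comp_rhoBar (hT₀ : T ⊆ Ici 0) (h0T : (0:ℝ) ∈ T) {f : ℝ → ℝ}
    {p : ℝ≥0∞} (hf : MemLp f p (lamDelta T)) :
    MemLp (f ∘ rhoBar T) p (volume.restrict (Icc 0 1)) :=
  (memLp_map_measure_iff hf.1 (monotone_rhoBar hT₀ h0T).measurable.aemeasurable).1 hf

lemma setIntegral_Ico_inter_lamDelta (hT : IsClosed T) (hTsub : T ⊆ Icc 0 1)
    (h0T : (0:ℝ) ∈ T) {f : ℝ → ℝ} (hf : AEStronglyMeasurable f (lamDelta T))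
    {t : ℝ} (ht : t ∈ T) :
    ∫ s in Ico 0 t ∩ T, f s ∂(lamDelta T) = ∫ s in Ico 0 t, f (rhoBar T s) := by
  have hT₀ : T ⊆ Ici 0 := fun u hu => (hTsub hu).1
  have hIco : Ico (0:ℝ) t ⊆ Icc 0 1 :=
    Ico_subset_Icc_self.trans (Icc_subset_Icc_right (hTsub ht).2)
  rw [lamDelta, setIntegral_map (measurableSet_Ico.inter hT.measurableSet) hf
      (monotone_rhoBar hT₀ h0T).measurable.aemeasurable,
    Measure.restrict_congr_set (rhoBar_preimage_Ico_inter_ae_eq hT hT₀ h0T ht),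
    Measure.restrict_restrict measurableSet_Ico, inter_eq_left.2 hIco]

end lamDelta

theorem stmt_11_general (T : Set ℝ) (hT : IsClosed T) (hTsub : T ⊆ Icc 0 1)
    (h0T : (0:ℝ) ∈ T) :
    ∀ hΔ : ℝ → ℝ, MemLp hΔ 2 (lamDelta T) →
      ∃ g : ℝ → ℝ, MemLp g 2 (volume.restrict (Icc 0 1)) ∧
        ∀ t ∈ T, (∫ s in Ico (0:ℝ) t, g s)
          = ∫ s in Ico (0:ℝ) t ∩ T, hΔ s ∂(lamDelta T) := by
  intro hΔ hmem
  refine ⟨hΔ ∘ rhoBar T, memLp_comp_rhoBar (fun _ hu => (hTsub hu).1) h0T hmem,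
    fun t ht => ?_⟩
  rw [setIntegral_Ico_inter_lamDelta hT hTsub h0T hmem.1 ht]
  rfl

theorem stmt_11 (T : Set ℝ) (hT : IsClosed T) (hTsub : T ⊆ Icc 0 1)
    (h0T : (0:ℝ) ∈ T) (h1T : (1:ℝ) ∈ T) :
    ∀ hΔ : ℝ → ℝ, MemLp hΔ 2 (lamDelta T) →
      ∃ g : ℝ → ℝ, MemLp g 2 (volume.restrict (Icc 0 1)) ∧
        ∀ t ∈ T, (∫ s in Ico (0:ℝ) t, g s)
          = ∫ s in Ico (0:ℝ) t ∩ T, hΔ s ∂(lamDelta T) :=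
  stmt_11_general T hT hTsub h0T
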